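/- For natural numbers n ≥ 1 and k with 1 ≤ k ≤ n, define U_n(x) = (1/n!) · Σ_{i=0}^{n} (-1)^i · C(n,i) · max(x-i,0)^n. Then U_n(k) - U_n(k-1) = (1/n!) · Σ_{i=0}^{k} (-1)^i · C(n+1,i) · (k-i)^n. -/

import Mathlib

open Finset

theorem stmt_1 (n k : ℕ) (hn : 1 ≤ n) (hk : 1 ≤ k) (hkn : k ≤ n)
    (U : ℝ → ℝ)
    (hU : ∀ x : ℝ, U x = (1 / (n.factorial : ℝ)) *
      ∑ i ∈ Finset.range (n + 1), (-1 : ℝ) ^ i * (n.choose i : ℝ) * max (x - i) 0 ^ n) :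
    U k - U (k - 1) = (1 / (n.factorial : ℝ)) *
      ∑ i ∈ Finset.range (k + 1), (-1 : ℝ) ^ i * ((n + 1).choose i : ℝ) * ((k : ℝ) - i) ^ n := by
  rw [hU, hU, ← mul_sub]
  congr 1
  have hsub : Finset.range (k + 1) ⊆ Finset.range (n + 1) := by
    apply Finset.range_subset_range.2; omega
  have hsub' : Finset.range k ⊆ Finset.range (n + 1) := by
    apply Finset.range_subset_range.2; omega
  have hA : (∑ i ∈ Finset.range (n + 1),
      (-1 : ℝ) ^ i * (n.choose i : ℝ) * max ((k : ℝ) - i) 0 ^ n)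
      = ∑ i ∈ Finset.range (k + 1), (-1 : ℝ) ^ i * (n.choose i : ℝ) * ((k : ℝ) - i) ^ n := by
    have hv : ∀ i ∈ Finset.range (n + 1), i ∉ Finset.range (k + 1) →
        (-1 : ℝ) ^ i * (n.choose i : ℝ) * max ((k : ℝ) - i) 0 ^ n = 0 := by
      intro i hi hni
      simp only [Finset.mem_range] at hi hni
      have : (k : ℝ) ≤ i := by exact_mod_cast (by omega : k ≤ i)
      rw [max_eq_right (by linarith), zero_pow (by omega), mul_zero]
    rw [← Finset.sum_subset hsub hv]
    apply Finset.sum_congr rfl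
    intro i hi
    simp only [Finset.mem_range] at hi
    have : (i : ℝ) ≤ k := by exact_mod_cast Nat.lt_succ_iff.mp hi
    rw [max_eq_left (by linarith)]
  have hB : (∑ i ∈ Finset.range (n + 1),
      (-1 : ℝ) ^ i * (n.choose i : ℝ) * max (((k : ℝ) - 1) - i) 0 ^ n)
      = ∑ i ∈ Finset.range k, (-1 : ℝ) ^ i * (n.choose i : ℝ) * (((k : ℝ) - 1) - i) ^ n := by
    have hv : ∀ i ∈ Finset.range (n + 1), i ∉ Finset.range k →
        (-1 : ℝ) ^ i * (n.choose i : ℝ) * max (((k : ℝ) - 1) - i) 0 ^ n = 0 := by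
      intro i hi hni
      simp only [Finset.mem_range] at hi hni
      have : (k : ℝ) ≤ i := by exact_mod_cast (by omega : k ≤ i)
      rw [max_eq_right (by linarith), zero_pow (by omega), mul_zero]
    rw [← Finset.sum_subset hsub' hv]
    apply Finset.sum_congr rfl
    intro i hi
    simp only [Finset.mem_range] at hi
    have : (i : ℝ) + 1 ≤ k := by exact_mod_cast hi
    rw [max_eq_left (by linarith)]
  rw [hA, hB]
  rw [Finset.sum_range_succ' (fun i => (-1 : ℝ) ^ i * (n.choose i : ℝ) * ((k : ℝ) - i) ^ n) k,
      Finset.sum_range_succ' (fun i => (-1 : ℝ) ^ i * ((n + 1).choose i : ℝ) * ((k : ℝ) - i) ^ n) k]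
  simp only [Nat.choose_zero_right, Nat.cast_one, pow_zero, Nat.cast_zero, sub_zero, one_mul,
    mul_one]
  rw [add_sub_right_comm, ← Finset.sum_sub_distrib]
  congr 1
  apply Finset.sum_congr rfl
  intro i hi
  have hcast : (((n + 1).choose (i + 1)) : ℝ) = (n.choose i : ℝ) + (n.choose (i + 1) : ℝ) := by
    rw [Nat.choose_succ_succ]
    push_cast
    ring
  rw [hcast]
  push_cast
  ring
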